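/- arXiv:2003.03042 — 2 statements merged into one kernel-verified Lean document; each statement's English description precedes it below -/
import Mathlib

section
/- Double robustness with a correctly specified outcome model: let m_a be a version of the outcome regression E[Y | X, A = a], and let e* : 𝒳 → ℝ be ANY measurable function (a possibly misspecified propensity model) satisfying e*(x) ≥ ε for all x, for some ε > 0. Then for every measurable subgroup w ⊆ 𝒳, E[ 1{X ∈ w} · ( m_a(X) + 1{A = a} · (Y − m_a(X)) / e*(X) ) ] = ∫_{{X ∈ w}} m_a(X) dP; i.e. the augmentation term has mean zero. -/
/-!
On the event `{A = a}` the residual `Y - m_a(X)` has conditional expectation zero given `X`,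
because `m_a(X)` has the same integrals as `Y` over every set `{X ∈ B} ∩ {A = a}`. A residual
with vanishing conditional expectation is orthogonal to every bounded function of `X`, in
particular to `1{X ∈ w} / e*(X)`, which is bounded by `1 / ε`. Hence the augmentation term
integrates to zero over `{X ∈ w}`, whatever `e*` is.
-/

open MeasureTheory

section ResidualOrthogonality

variable {Ω 𝒳 : Type*} [MeasurableSpace Ω] [MeasurableSpace 𝒳] {μ : Measure Ω}
  [IsFiniteMeasure μ] {X : Ω → 𝒳} {Y : Ω → ℝ} {m : 𝒳 → ℝ}

lemma comp_ae_eq_condExp_comap (hX : Measurable X) (hY : Integrable Y μ) (hm : Measurable m)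
    (hmX : Integrable (fun ω => m (X ω)) μ)
    (hOR : ∀ B : Set 𝒳, MeasurableSet B →
      ∫ ω in X ⁻¹' B, Y ω ∂μ = ∫ ω in X ⁻¹' B, m (X ω) ∂μ) :
    (fun ω => m (X ω)) =ᵐ[μ] μ[Y | MeasurableSpace.comap X ‹_›] := by
  refine ae_eq_condExp_of_forall_setIntegral_eq hX.comap_le hY
    (fun _ _ _ => hmX.integrableOn) ?_ (hm.comp (comap_measurable X)).aestronglyMeasurable
  rintro _ ⟨B, hB, rfl⟩ _
  exact (hOR B hB).symm

lemma integral_comp_mul_sub_eq_zero (hX : Measurable X) (hY : Integrable Y μ)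
    (hm : Measurable m) (hmX : Integrable (fun ω => m (X ω)) μ)
    (hOR : ∀ B : Set 𝒳, MeasurableSet B →
      ∫ ω in X ⁻¹' B, Y ω ∂μ = ∫ ω in X ⁻¹' B, m (X ω) ∂μ)
    {h : 𝒳 → ℝ} (hh : Measurable h) {C : ℝ} (hC : ∀ x, ‖h x‖ ≤ C) :
    ∫ ω, h (X ω) * (Y ω - m (X ω)) ∂μ = 0 := by
  have hhX : StronglyMeasurable[MeasurableSpace.comap X ‹_›] (fun ω => h (X ω)) :=
    (hh.comp (comap_measurable X)).stronglyMeasurable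
  have hhX_ae : AEStronglyMeasurable (fun ω => h (X ω)) μ :=
    (hhX.mono hX.comap_le).aestronglyMeasurable
  have hbdd : ∀ᵐ ω ∂μ, ‖h (X ω)‖ ≤ C := Filter.Eventually.of_forall fun _ => hC _
  have hhY : Integrable (fun ω => h (X ω) * Y ω) μ := hY.bdd_mul hhX_ae hbdd
  have hY_part : ∫ ω, h (X ω) * Y ω ∂μ = ∫ ω, h (X ω) * m (X ω) ∂μ :=
    calc ∫ ω, h (X ω) * Y ω ∂μ
        = ∫ ω, (μ[(fun ω => h (X ω)) * Y | MeasurableSpace.comap X ‹_›]) ω ∂μ :=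
          (integral_condExp hX.comap_le).symm
      _ = ∫ ω, h (X ω) * (μ[Y | MeasurableSpace.comap X ‹_›]) ω ∂μ :=
          integral_congr_ae (condExp_mul_of_stronglyMeasurable_left hhX hhY hY)
      _ = ∫ ω, h (X ω) * m (X ω) ∂μ := by
          refine integral_congr_ae ?_
          filter_upwards [comp_ae_eq_condExp_comap hX hY hm hmX hOR] with ω hω
          rw [hω]
  simp_rw [mul_sub]
  rw [integral_sub hhY (hmX.bdd_mul hhX_ae hbdd), hY_part, sub_self]

end ResidualOrthogonality

lemma norm_indicator_inv_le {𝒳 : Type*} {e : 𝒳 → ℝ} {ε : ℝ} (hε : 0 < ε)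
    (he : ∀ x, ε ≤ e x) (w : Set 𝒳) (x : 𝒳) :
    ‖w.indicator (fun x => (e x)⁻¹) x‖ ≤ ε⁻¹ := by
  refine (norm_indicator_le_norm_self _ x).trans ?_
  rw [norm_inv, Real.norm_of_nonneg (hε.le.trans (he x))]
  exact inv_anti₀ hε (he x)

theorem dr_correct_outcome_model_general
    {Ω : Type*} [MeasurableSpace Ω] (P : Measure Ω) [IsProbabilityMeasure P]
    {𝒳 : Type*} [MeasurableSpace 𝒳]
    (X : Ω → 𝒳) (hX : Measurable X)
    (A : Ω → ℝ) (hA : Measurable A)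
    (Y : Ω → ℝ) (hYint : Integrable Y P)
    (a : ℝ)
    -- a version of the outcome regression E[Y | X, A = a]
    (m : 𝒳 → ℝ) (hm : Measurable m)
    (hmint : Integrable (fun ω => m (X ω)) P)
    (hmOR : ∀ B : Set 𝒳, MeasurableSet B →
      ∫ ω in X ⁻¹' B ∩ {ω | A ω = a}, Y ω ∂P
        = ∫ ω in X ⁻¹' B ∩ {ω | A ω = a}, m (X ω) ∂P)
    -- ANY measurable propensity model bounded below by ε > 0
    (estar : 𝒳 → ℝ) (hestar : Measurable estar)
    (ε : ℝ) (hε : 0 < ε) (hestarpos : ∀ x, ε ≤ estar x)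
    -- the subgroup
    (w : Set 𝒳) (hw : MeasurableSet w) :
    ∫ ω, (X ⁻¹' w).indicator
        (fun ω' => m (X ω')
          + ({ω'' | A ω'' = a}).indicator
              (fun ω'' => (Y ω'' - m (X ω'')) / estar (X ω'')) ω') ω ∂P
      = ∫ ω in X ⁻¹' w, m (X ω) ∂P := by
  set S := {ω | A ω = a}
  have hS : MeasurableSet S := hA (measurableSet_singleton a)
  set g := w.indicator fun x => (estar x)⁻¹
  have hg : ∀ x, ‖g x‖ ≤ ε⁻¹ := norm_indicator_inv_le hε hestarpos w
  have hsplit : (X ⁻¹' w).indicator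
        (fun ω => m (X ω) + S.indicator (fun ω => (Y ω - m (X ω)) / estar (X ω)) ω)
      = (X ⁻¹' w).indicator (fun ω => m (X ω))
        + S.indicator (fun ω => g (X ω) * (Y ω - m (X ω))) := by
    ext ω
    by_cases hwω : X ω ∈ w <;> by_cases hSω : ω ∈ S <;>
      simp [g, hwω, hSω, div_eq_inv_mul]
  have hresidual : ∫ ω in S, g (X ω) * (Y ω - m (X ω)) ∂P = 0 := by
    refine integral_comp_mul_sub_eq_zero hX hYint.restrict hm hmint.restrict (fun B hB => ?_)
      (hestar.inv.indicator hw) hg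
    rw [Measure.restrict_restrict (hX hB)]
    exact hmOR B hB
  have hresidual_int : Integrable (fun ω => g (X ω) * (Y ω - m (X ω))) P :=
    (hYint.sub hmint).bdd_mul ((hestar.inv.indicator hw).comp hX).aestronglyMeasurable
      (Filter.Eventually.of_forall fun _ => hg _)
  rw [hsplit, integral_add' (hmint.indicator (hX hw)) (hresidual_int.indicator hS),
    integral_indicator (hX hw), integral_indicator hS, hresidual, add_zero]

/-- Double robustness with a correctly specified outcome model: for any
measurable `e* ≥ ε > 0` (a possibly misspecified propensity model) and any measurable
subgroup `w`, `E[1{X ∈ w}(m_a(X) + 1{A = a}(Y − m_a(X))/e*(X))] = ∫_{X ∈ w} m_a(X) dP`. -/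
theorem dr_correct_outcome_model
    {Ω : Type*} [MeasurableSpace Ω] (P : Measure Ω) [IsProbabilityMeasure P]
    {𝒳 : Type*} [MeasurableSpace 𝒳]
    (X : Ω → 𝒳) (hX : Measurable X)
    (A : Ω → ℝ) (hA : Measurable A) (hA01 : ∀ ω, A ω = 0 ∨ A ω = 1)
    (Y : Ω → ℝ) (hY : Measurable Y) (hYint : Integrable Y P)
    (a : ℝ) (ha : a = 0 ∨ a = 1)
    -- a version of the outcome regression E[Y | X, A = a]
    (m : 𝒳 → ℝ) (hm : Measurable m)
    (hmint : Integrable (fun ω => m (X ω)) P)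
    (hmOR : ∀ B : Set 𝒳, MeasurableSet B →
      ∫ ω in X ⁻¹' B ∩ {ω | A ω = a}, Y ω ∂P
        = ∫ ω in X ⁻¹' B ∩ {ω | A ω = a}, m (X ω) ∂P)
    -- ANY measurable propensity model bounded below by ε > 0
    (estar : 𝒳 → ℝ) (hestar : Measurable estar)
    (ε : ℝ) (hε : 0 < ε) (hestarpos : ∀ x, ε ≤ estar x)
    -- the subgroup
    (w : Set 𝒳) (hw : MeasurableSet w) :
    ∫ ω, (X ⁻¹' w).indicator
        (fun ω' => m (X ω')
          + ({ω'' | A ω'' = a}).indicator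
              (fun ω'' => (Y ω'' - m (X ω'')) / estar (X ω'')) ω') ω ∂P
      = ∫ ω in X ⁻¹' w, m (X ω) ∂P :=
  dr_correct_outcome_model_general P X hX A hA Y hYint a m hm hmint hmOR estar hestar ε hε hestarpos
    w hw
end

section
/- Double robustness with a correctly specified propensity score: let e_a be a version of the propensity score with e_a(X) ≥ ε almost surely for some ε > 0, let m_a be a version of the outcome regression E[Y | X, A = a], and let g : 𝒳 → ℝ be ANY measurable function (a possibly misspecified outcome model) with g ∘ X integrable. Then for every measurable subgroup w ⊆ 𝒳, E[ 1{X ∈ w} · ( g(X) + 1{A = a} · (Y − g(X)) / e_a(X) ) ] = ∫_{{X ∈ w}} m_a(X) dP. -/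
/-! The propensity-score identity says that the law of `X` on `{A = a}` has density `e` with
respect to the law of `X`, so inverse-propensity weighting undoes the selection:
`E[1{A = a} h(X) / e(X)] = E[h(X)]` for every `h`. Conditioning on `X` replaces `Y` by `m(X)` in
`E[1{A = a} 1_w(X) Y / e(X)]`, and the two terms involving `g` then cancel, whatever `g` is. -/

open MeasureTheory

lemma withDensity_ofReal_eq_of_setIntegral_eq {α : Type*} [MeasurableSpace α]
    {μ ν : Measure α} [IsFiniteMeasure μ] [IsFiniteMeasure ν] {f : α → ℝ}
    (hf : Measurable f) (hf0 : 0 ≤ᵐ[μ] f)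
    (h : ∀ s, MeasurableSet s → ∫ x in s, f x ∂μ = (ν s).toReal) :
    μ.withDensity (fun x => ENNReal.ofReal (f x)) = ν := by
  ext B hB
  -- where `f` is bounded it is integrable and `h` applies; continuity from below does the rest
  let s : ℕ → Set α := fun n => B ∩ {x | f x ≤ n}
  have hs_mono : Monotone s := fun n k hnk =>
    Set.inter_subset_inter_right B fun x (hx : f x ≤ n) => hx.trans (by exact_mod_cast hnk)
  have hs_union : ⋃ n, s n = B := by
    ext x
    simpa [s] using fun _ => exists_nat_ge (f x)
  have hs_eq (n : ℕ) : μ.withDensity (fun x => ENNReal.ofReal (f x)) (s n) = ν (s n) := by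
    have hsn : MeasurableSet (s n) := hB.inter (measurableSet_le hf measurable_const)
    have hf0' : 0 ≤ᵐ[μ.restrict (s n)] f := ae_restrict_of_ae hf0
    have hint : IntegrableOn f (s n) μ := by
      refine Integrable.mono' (integrable_const (n : ℝ)) hf.aestronglyMeasurable ?_
      filter_upwards [ae_restrict_mem hsn, hf0'] with x hx hx0
      rw [Real.norm_eq_abs, abs_of_nonneg hx0]
      exact hx.2
    rw [withDensity_apply _ hsn, ← ofReal_integral_eq_lintegral_ofReal hint hf0', h _ hsn,
      ENNReal.ofReal_toReal (measure_ne_top ν _)]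
  rw [← hs_union, hs_mono.measure_iUnion, hs_mono.measure_iUnion]
  simp_rw [hs_eq]

lemma setIntegral_comp_eq_integral_mul {Ω 𝒳 : Type*} [MeasurableSpace Ω] [MeasurableSpace 𝒳]
    {P : Measure Ω} [IsFiniteMeasure P] {X : Ω → 𝒳} (hX : Measurable X) {S : Set Ω}
    {e : 𝒳 → ℝ} (he : Measurable e) (he0 : ∀ᵐ ω ∂P, 0 ≤ e (X ω))
    (hePS : ∀ B, MeasurableSet B → ∫ ω in X ⁻¹' B, e (X ω) ∂P = (P (X ⁻¹' B ∩ S)).toReal)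
    {f : 𝒳 → ℝ} (hf : Measurable f) :
    ∫ ω in S, f (X ω) ∂P = ∫ ω, e (X ω) * f (X ω) ∂P := by
  have he0' : 0 ≤ᵐ[P.map X] e :=
    (ae_map_iff hX.aemeasurable (measurableSet_le measurable_const he)).2 he0
  have hmap : (P.map X).withDensity (fun x => ENNReal.ofReal (e x)) = (P.restrict S).map X := by
    refine withDensity_ofReal_eq_of_setIntegral_eq he he0' fun B hB => ?_
    rw [setIntegral_map hB he.aestronglyMeasurable hX.aemeasurable, hePS B hB,
      Measure.map_apply hX hB, Measure.restrict_apply (hX hB)]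
  calc ∫ ω in S, f (X ω) ∂P
      = ∫ x, f x ∂(P.map X).withDensity (fun x => ENNReal.ofReal (e x)) := by
        rw [hmap, integral_map hX.aemeasurable hf.aestronglyMeasurable]
    _ = ∫ x, e x * f x ∂P.map X := by
        rw [integral_withDensity_eq_integral_toReal_smul he.ennreal_ofReal
          (ae_of_all _ fun _ => ENNReal.ofReal_lt_top)]
        refine integral_congr_ae (he0'.mono fun x hx => ?_)
        simp [ENNReal.toReal_ofReal hx]
    _ = ∫ ω, e (X ω) * f (X ω) ∂P := integral_map hX.aemeasurable (he.mul hf).aestronglyMeasurable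

lemma integral_mul_eq_of_forall_setIntegral_eq {Ω : Type*} {m m₀ : MeasurableSpace Ω}
    {μ : Measure[m₀] Ω} [IsFiniteMeasure μ] (hm : m ≤ m₀) {f g φ : Ω → ℝ} {C : ℝ}
    (hf : Integrable f μ) (hg : Integrable g μ) (hg_meas : StronglyMeasurable[m] g)
    (hfg : ∀ s, MeasurableSet[m] s → ∫ x in s, f x ∂μ = ∫ x in s, g x ∂μ)
    (hφ : StronglyMeasurable[m] φ) (hφC : ∀ᵐ x ∂μ, ‖φ x‖ ≤ C) :
    ∫ x, φ x * f x ∂μ = ∫ x, φ x * g x ∂μ := by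
  have hg_condExp : g =ᵐ[μ] μ[f|m] :=
    ae_eq_condExp_of_forall_setIntegral_eq hm hf (fun _ _ _ => hg.integrableOn)
      (fun s hs _ => (hfg s hs).symm) hg_meas.aestronglyMeasurable
  have hφf : Integrable (φ * f) μ := hf.bdd_mul (hφ.mono hm).aestronglyMeasurable hφC
  calc ∫ x, φ x * f x ∂μ = ∫ x, μ[φ * f|m] x ∂μ := (integral_condExp hm).symm
    _ = ∫ x, φ x * g x ∂μ := by
        refine integral_congr_ae ?_
        filter_upwards [condExp_mul_of_stronglyMeasurable_left hφ hφf hf, hg_condExp]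
          with x hx hgx
        rw [hx, Pi.mul_apply, hgx]

section CausalIdentities

variable {Ω 𝒳 : Type*} [MeasurableSpace Ω] [MeasurableSpace 𝒳] {P : Measure Ω}
  [IsFiniteMeasure P] {X : Ω → 𝒳} {S : Set Ω}

lemma setIntegral_mul_comp_eq_of_forall_setIntegral_eq (hX : Measurable X) {Y : Ω → ℝ}
    (hY : Integrable Y P) {m : 𝒳 → ℝ} (hm : Measurable m) (hmX : Integrable (fun ω => m (X ω)) P)
    (hmOR : ∀ B, MeasurableSet B →
      ∫ ω in X ⁻¹' B ∩ S, Y ω ∂P = ∫ ω in X ⁻¹' B ∩ S, m (X ω) ∂P)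
    {φ : 𝒳 → ℝ} (hφ : Measurable φ) {C : ℝ} (hφC : ∀ᵐ ω ∂P, ‖φ (X ω)‖ ≤ C) :
    ∫ ω in S, φ (X ω) * Y ω ∂P = ∫ ω in S, φ (X ω) * m (X ω) ∂P := by
  have hX' : Measurable[MeasurableSpace.comap X ‹_›] X := comap_measurable X
  refine integral_mul_eq_of_forall_setIntegral_eq hX.comap_le hY.restrict hmX.restrict
    (hm.comp hX').stronglyMeasurable ?_ (hφ.comp hX').stronglyMeasurable (ae_restrict_of_ae hφC)
  rintro _ ⟨B, hB, rfl⟩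
  rw [Measure.restrict_restrict (hX hB)]
  exact hmOR B hB

lemma setIntegral_indicator_div_mul_eq (hX : Measurable X) {e : 𝒳 → ℝ} (he : Measurable e)
    (he_pos : ∀ᵐ ω ∂P, 0 < e (X ω))
    (hePS : ∀ B, MeasurableSet B → ∫ ω in X ⁻¹' B, e (X ω) ∂P = (P (X ⁻¹' B ∩ S)).toReal)
    {w : Set 𝒳} (hw : MeasurableSet w) {f : 𝒳 → ℝ} (hf : Measurable f) :
    ∫ ω in S, w.indicator 1 (X ω) / e (X ω) * f (X ω) ∂P = ∫ ω in X ⁻¹' w, f (X ω) ∂P := by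
  rw [setIntegral_comp_eq_integral_mul (f := fun x => w.indicator 1 x / e x * f x) hX he
    (he_pos.mono fun _ h => h.le) hePS (((measurable_const.indicator hw).div he).mul hf),
    ← integral_indicator (hX hw)]
  refine integral_congr_ae (he_pos.mono fun ω h => ?_)
  by_cases hω : X ω ∈ w
  · simp [hω, h.ne']
  · simp [hω]

end CausalIdentities

theorem dr_correct_propensity_model_general
    {Ω : Type*} [MeasurableSpace Ω] (P : Measure Ω) [IsProbabilityMeasure P]
    {𝒳 : Type*} [MeasurableSpace 𝒳]
    (X : Ω → 𝒳) (hX : Measurable X)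
    (A : Ω → ℝ) (hA : Measurable A)
    (Y : Ω → ℝ) (hYint : Integrable Y P)
    (a : ℝ)
    -- a version of the propensity score, with e_a(X) ≥ ε > 0 a.s.
    (e : 𝒳 → ℝ) (he : Measurable e)
    (hePS : ∀ B : Set 𝒳, MeasurableSet B →
      ∫ ω in X ⁻¹' B, e (X ω) ∂P = (P (X ⁻¹' B ∩ {ω | A ω = a})).toReal)
    (ε : ℝ) (hε : 0 < ε) (hpos : ∀ᵐ ω ∂P, ε ≤ e (X ω))
    -- a version of the outcome regression E[Y | X, A = a]
    (m : 𝒳 → ℝ) (hm : Measurable m)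
    (hmint : Integrable (fun ω => m (X ω)) P)
    (hmOR : ∀ B : Set 𝒳, MeasurableSet B →
      ∫ ω in X ⁻¹' B ∩ {ω | A ω = a}, Y ω ∂P
        = ∫ ω in X ⁻¹' B ∩ {ω | A ω = a}, m (X ω) ∂P)
    -- ANY measurable outcome model with integrable composition
    (g : 𝒳 → ℝ) (hg : Measurable g)
    (hgint : Integrable (fun ω => g (X ω)) P)
    -- the subgroup
    (w : Set 𝒳) (hw : MeasurableSet w) :
    ∫ ω, (X ⁻¹' w).indicator
        (fun ω' => g (X ω')
          + ({ω'' | A ω'' = a}).indicator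
              (fun ω'' => (Y ω'' - g (X ω'')) / e (X ω'')) ω') ω ∂P
      = ∫ ω in X ⁻¹' w, m (X ω) ∂P := by
  set S := {ω | A ω = a}
  have hS : MeasurableSet S := hA (measurableSet_singleton a)
  set ψ : 𝒳 → ℝ := fun x => w.indicator 1 x / e x
  have hψ : Measurable ψ := (measurable_const.indicator hw).div he
  have he_pos : ∀ᵐ ω ∂P, 0 < e (X ω) := hpos.mono fun _ h => hε.trans_le h
  have hψ_bdd : ∀ᵐ ω ∂P, ‖ψ (X ω)‖ ≤ 1 / ε := hpos.mono fun ω h => by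
    rw [norm_div, Real.norm_of_nonneg (hε.le.trans h)]
    exact div_le_div₀ zero_le_one ((norm_indicator_le_norm_self _ _).trans (by simp)) hε h
  have hψY : Integrable (fun ω => ψ (X ω) * Y ω) P :=
    hYint.bdd_mul (hψ.comp hX).aestronglyMeasurable hψ_bdd
  have hψg : Integrable (fun ω => ψ (X ω) * g (X ω)) P :=
    hgint.bdd_mul (hψ.comp hX).aestronglyMeasurable hψ_bdd
  have hsplit : (fun ω => (X ⁻¹' w).indicator (fun ω' => g (X ω')
        + S.indicator (fun ω'' => (Y ω'' - g (X ω'')) / e (X ω'')) ω') ω)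
      = fun ω => (X ⁻¹' w).indicator (fun ω => g (X ω)) ω
          + S.indicator (fun ω => ψ (X ω) * Y ω - ψ (X ω) * g (X ω)) ω := by
    ext ω
    by_cases hw' : X ω ∈ w <;> by_cases hS' : ω ∈ S <;> simp [hw', hS', ψ, div_eq_inv_mul, mul_sub]
  have hdiff : Integrable (S.indicator fun ω => ψ (X ω) * Y ω - ψ (X ω) * g (X ω)) P :=
    (hψY.sub hψg).indicator hS
  rw [hsplit, integral_add (hgint.indicator (hX hw)) hdiff,
    integral_indicator (hX hw), integral_indicator hS, integral_sub hψY.restrict hψg.restrict,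
    setIntegral_mul_comp_eq_of_forall_setIntegral_eq hX hYint hm hmint hmOR hψ hψ_bdd,
    setIntegral_indicator_div_mul_eq hX he he_pos hePS hw hm,
    setIntegral_indicator_div_mul_eq hX he he_pos hePS hw hg]
  ring

/-- Double robustness with a correctly specified propensity score: for any
measurable `g` (a possibly misspecified outcome model) with `g ∘ X` integrable and any
measurable subgroup `w`,
`E[1{X ∈ w}(g(X) + 1{A = a}(Y − g(X))/e_a(X))] = ∫_{X ∈ w} m_a(X) dP`. -/
theorem dr_correct_propensity_model
    {Ω : Type*} [MeasurableSpace Ω] (P : Measure Ω) [IsProbabilityMeasure P]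
    {𝒳 : Type*} [MeasurableSpace 𝒳]
    (X : Ω → 𝒳) (hX : Measurable X)
    (A : Ω → ℝ) (hA : Measurable A) (hA01 : ∀ ω, A ω = 0 ∨ A ω = 1)
    (Y : Ω → ℝ) (hY : Measurable Y) (hYint : Integrable Y P)
    (a : ℝ) (ha : a = 0 ∨ a = 1)
    -- a version of the propensity score, with e_a(X) ≥ ε > 0 a.s.
    (e : 𝒳 → ℝ) (he : Measurable e)
    (hePS : ∀ B : Set 𝒳, MeasurableSet B →
      ∫ ω in X ⁻¹' B, e (X ω) ∂P = (P (X ⁻¹' B ∩ {ω | A ω = a})).toReal)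
    (ε : ℝ) (hε : 0 < ε) (hpos : ∀ᵐ ω ∂P, ε ≤ e (X ω))
    -- a version of the outcome regression E[Y | X, A = a]
    (m : 𝒳 → ℝ) (hm : Measurable m)
    (hmint : Integrable (fun ω => m (X ω)) P)
    (hmOR : ∀ B : Set 𝒳, MeasurableSet B →
      ∫ ω in X ⁻¹' B ∩ {ω | A ω = a}, Y ω ∂P
        = ∫ ω in X ⁻¹' B ∩ {ω | A ω = a}, m (X ω) ∂P)
    -- ANY measurable outcome model with integrable composition
    (g : 𝒳 → ℝ) (hg : Measurable g)
    (hgint : Integrable (fun ω => g (X ω)) P)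
    -- the subgroup
    (w : Set 𝒳) (hw : MeasurableSet w) :
    ∫ ω, (X ⁻¹' w).indicator
        (fun ω' => g (X ω')
          + ({ω'' | A ω'' = a}).indicator
              (fun ω'' => (Y ω'' - g (X ω'')) / e (X ω'')) ω') ω ∂P
      = ∫ ω in X ⁻¹' w, m (X ω) ∂P :=
  dr_correct_propensity_model_general P X hX A hA Y hYint a e he hePS ε hε hpos m hm hmint hmOR g hg
    hgint w hw
end
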